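/- Let X be a compact metric space, μ a Borel probability measure on X, and k : X × X → ℝ a continuous, strictly positive kernel. Define deg_R(z) := ∫ k(z, z') dμ(z'), deg_L(z') := ∫ k(z, z')/deg_R(z) dμ(z), the normalized kernel k̃(z, z') := k(z, z')/(deg_R(z)·deg_L(z')^{1/2}), and p(z, z') := ∫ k̃(z, u)·k̃(z', u) dμ(u). Then (a) p is symmetric: p(z, z') = p(z', z) for all z, z' ∈ X; and (b) p is Markov: ∫ p(z, z') dμ(z') = 1 for every z ∈ X. In particular the constant function 1 satisfies ∫ p(z, z')·1 dμ(z') = 1 for all z, i.e., it is an eigenfunction with eigenvalue 1 of the integral operator associated to p. -/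

import Mathlib

/-!
Symmetry of `p` is immediate. For the Markov property, Fubini turns `∫ p(z, z') dz'` into
`∫ k̃(z, u) (∫ k̃(z', u) dz') du`; the inner integral is `deg_L(u) / √deg_L(u) = √deg_L(u)`, and
`k̃(z, u) √deg_L(u) = k(z, u) / deg_R(z)` integrates to `1`. Continuity and strict positivity of `k`
on the compact space make `deg_R` and `deg_L` continuous and strictly positive, which legitimises
the divisions and makes every integrand continuous, hence integrable.
-/

open MeasureTheory

/-- The right degree function `deg_R(z) = ∫ k(z, z') dμ(z')`. -/
noncomputable def degR {X : Type*} [MeasurableSpace X] (μ : Measure X) (k : X → X → ℝ)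
    (z : X) : ℝ :=
  ∫ z', k z z' ∂μ

/-- The left degree function `deg_L(z') = ∫ k(z, z')/deg_R(z) dμ(z)`. -/
noncomputable def degL {X : Type*} [MeasurableSpace X] (μ : Measure X) (k : X → X → ℝ)
    (z' : X) : ℝ :=
  ∫ z, k z z' / degR μ k z ∂μ

/-- The normalized kernel `k̃(z, z') = k(z, z') / (deg_R(z) · deg_L(z')^{1/2})`. -/
noncomputable def ktilde {X : Type*} [MeasurableSpace X] (μ : Measure X) (k : X → X → ℝ)
    (z z' : X) : ℝ :=
  k z z' / (degR μ k z * Real.sqrt (degL μ k z'))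

/-- The bistochastic kernel `p(z, z') = ∫ k̃(z, u) · k̃(z', u) dμ(u)`. -/
noncomputable def pker {X : Type*} [MeasurableSpace X] (μ : Measure X) (k : X → X → ℝ)
    (z z' : X) : ℝ :=
  ∫ u, ktilde μ k z u * ktilde μ k z' u ∂μ

theorem integral_pos_of_forall_pos {α : Type*} [MeasurableSpace α] {μ : Measure α} [NeZero μ]
    {f : α → ℝ} (hf : Integrable f μ) (hpos : ∀ x, 0 < f x) : 0 < ∫ x, f x ∂μ := by
  rw [integral_pos_iff_support_of_nonneg (fun x ↦ (hpos x).le) hf,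
    Function.support_eq_univ fun x ↦ (hpos x).ne']
  exact Measure.measure_univ_pos.2 (NeZero.ne μ)

section Normalization

variable {X : Type*} [MeasurableSpace X] (μ : Measure X) (k : X → X → ℝ)

theorem pker_comm (z z' : X) : pker μ k z z' = pker μ k z' z := by
  simp only [pker, mul_comm]

theorem integral_ktilde_left (u : X) : ∫ z, ktilde μ k z u ∂μ = √(degL μ k u) := by
  simp_rw [ktilde, ← div_div]
  rw [integral_div]
  exact Real.div_sqrt

theorem integral_ktilde_mul_sqrt_degL {z : X} (hz : degR μ k z ≠ 0)
    (hL : ∀ u, 0 < degL μ k u) : ∫ u, ktilde μ k z u * √(degL μ k u) ∂μ = 1 := by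
  have hrow (u : X) : ktilde μ k z u * √(degL μ k u) = k z u / degR μ k z := by
    rw [ktilde, ← div_div, div_mul_cancel₀ _ (Real.sqrt_pos.2 (hL u)).ne']
  simp_rw [hrow]
  rw [integral_div]
  exact div_self hz

theorem integral_pker_eq_one [SFinite μ] {z : X}
    (hint : Integrable (Function.uncurry fun z' u ↦ ktilde μ k z u * ktilde μ k z' u) (μ.prod μ))
    (hz : degR μ k z ≠ 0) (hL : ∀ u, 0 < degL μ k u) : ∫ z', pker μ k z z' ∂μ = 1 :=
  calc ∫ z', pker μ k z z' ∂μ = ∫ u, ∫ z', ktilde μ k z u * ktilde μ k z' u ∂μ ∂μ :=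
        integral_integral_swap hint
    _ = ∫ u, ktilde μ k z u * √(degL μ k u) ∂μ := by
        simp_rw [integral_const_mul, integral_ktilde_left]
    _ = 1 := integral_ktilde_mul_sqrt_degL μ k hz hL

end Normalization

section Continuity

variable {X : Type*} [TopologicalSpace X] [CompactSpace X] [MeasurableSpace X]
  [OpensMeasurableSpace X] (μ : Measure X) [IsFiniteMeasure μ] {k : X → X → ℝ}

theorem Continuous.integrable_of_compactSpace {f : X → ℝ} (hf : Continuous f) :
    Integrable f μ :=
  hf.integrable_of_hasCompactSupport (.of_compactSpace f)

theorem continuous_integral_of_continuous_uncurry [T2Space X] [FirstCountableTopology X]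
    {f : X → X → ℝ} (hf : Continuous (Function.uncurry f)) :
    Continuous fun z ↦ ∫ u, f z u ∂μ := by
  simpa using continuous_parametric_integral_of_continuous (μ := μ) hf isCompact_univ

theorem degR_pos [NeZero μ] (hk : Continuous (Function.uncurry k)) (hkpos : ∀ z z', 0 < k z z')
    (z : X) : 0 < degR μ k z :=
  integral_pos_of_forall_pos ((hk.uncurry_left z).integrable_of_compactSpace μ) (hkpos z)

variable [T2Space X] [FirstCountableTopology X]

theorem continuous_degR (hk : Continuous (Function.uncurry k)) : Continuous (degR μ k) :=
  continuous_integral_of_continuous_uncurry μ hk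

theorem continuous_div_degR [NeZero μ] (hk : Continuous (Function.uncurry k))
    (hkpos : ∀ z z', 0 < k z z') :
    Continuous (Function.uncurry fun z' z ↦ k z z' / degR μ k z) :=
  (hk.comp continuous_swap).div ((continuous_degR μ hk).comp continuous_snd)
    fun p ↦ (degR_pos μ hk hkpos p.2).ne'

variable [NeZero μ]

theorem continuous_degL (hk : Continuous (Function.uncurry k)) (hkpos : ∀ z z', 0 < k z z') :
    Continuous (degL μ k) :=
  continuous_integral_of_continuous_uncurry μ (continuous_div_degR μ hk hkpos)

theorem degL_pos (hk : Continuous (Function.uncurry k)) (hkpos : ∀ z z', 0 < k z z') (z' : X) :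
    0 < degL μ k z' :=
  integral_pos_of_forall_pos
    (((continuous_div_degR μ hk hkpos).uncurry_left z').integrable_of_compactSpace μ)
    fun z ↦ div_pos (hkpos z z') (degR_pos μ hk hkpos z)

theorem continuous_ktilde (hk : Continuous (Function.uncurry k)) (hkpos : ∀ z z', 0 < k z z') :
    Continuous (Function.uncurry (ktilde μ k)) :=
  hk.div (((continuous_degR μ hk).comp continuous_fst).mul
      ((continuous_degL μ hk hkpos).sqrt.comp continuous_snd))
    fun p ↦ (mul_pos (degR_pos μ hk hkpos p.1) (Real.sqrt_pos.2 (degL_pos μ hk hkpos p.2))).ne'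

end Continuity

/-- The bistochastic kernel `p` built from a continuous strictly positive kernel on a compact
metric space is symmetric and Markov; in particular the constant function `1` is an
eigenfunction of the associated integral operator with eigenvalue `1`. -/
theorem bistochastic_kernel_symmetric_markov
    {X : Type*} [MetricSpace X] [CompactSpace X] [MeasurableSpace X] [BorelSpace X]
    (μ : Measure X) [IsProbabilityMeasure μ]
    (k : X → X → ℝ) (hk : Continuous (Function.uncurry k))
    (hkpos : ∀ z z', 0 < k z z') :
    (∀ z z', pker μ k z z' = pker μ k z' z) ∧
    (∀ z, ∫ z', pker μ k z z' ∂μ = 1) ∧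
    (∀ z, ∫ z', pker μ k z z' * (1 : ℝ) ∂μ = 1) := by
  have hkt := continuous_ktilde μ hk hkpos
  have markov (z : X) : ∫ z', pker μ k z z' ∂μ = 1 := by
    refine integral_pker_eq_one μ k ?_ (degR_pos μ hk hkpos z).ne' (degL_pos μ hk hkpos)
    exact ((hkt.comp (continuous_const.prodMk continuous_snd)).mul
      (hkt.comp (continuous_fst.prodMk continuous_snd))).integrable_of_compactSpace (μ.prod μ)
  exact ⟨pker_comm μ k, markov, fun z ↦ by simpa using markov z⟩
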